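/- arXiv:2603.29550 — 3 statements merged into one kernel-verified Lean document; each statement's English description precedes it below -/
import Mathlib

section
/- Let S₁, S₂, S₃ be finite sets, μᵢ a distribution on Sᵢ for i = 1,2,3, and let R₁ ⊆ S₁ × S₂, R₂ ⊆ S₂ × S₃ be relations such that μ₁ ⊑_{R₁} μ₂ and μ₂ ⊑_{R₂} μ₃. Then μ₁ ⊑_R μ₃, where R = {(s₁,s₃) | ∃ s₂ ∈ S₂, (s₁,s₂) ∈ R₁ ∧ (s₂,s₃) ∈ R₂} is the relational composition of R₁ and R₂. -/
noncomputable def setSum {S : Type*} (μ : S → ℝ) (A : Set S) : ℝ := ∑ᶠ s ∈ A, μ s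

def relImg {S T : Type*} (R : Set (S × T)) (A : Set S) : Set T :=
  {t | ∃ s ∈ A, (s, t) ∈ R}

def distLe {S T : Type*} (R : Set (S × T)) (μ : S → ℝ) (ν : T → ℝ) : Prop :=
  ∀ A : Set S, setSum μ A ≤ setSum ν (relImg R A)

/-- Transitivity of distribution lifting via relational composition. -/
theorem distLe_trans_comp {S₁ S₂ S₃ : Type*} [Fintype S₁] [Fintype S₂] [Fintype S₃]
    (μ₁ : S₁ → ℝ) (μ₂ : S₂ → ℝ) (μ₃ : S₃ → ℝ)
    (h₁0 : ∀ s, 0 ≤ μ₁ s) (h₁ : ∑ s, μ₁ s = 1)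
    (h₂0 : ∀ s, 0 ≤ μ₂ s) (h₂ : ∑ s, μ₂ s = 1)
    (h₃0 : ∀ s, 0 ≤ μ₃ s) (h₃ : ∑ s, μ₃ s = 1)
    (R₁ : Set (S₁ × S₂)) (R₂ : Set (S₂ × S₃))
    (h12 : distLe R₁ μ₁ μ₂) (h23 : distLe R₂ μ₂ μ₃) :
    distLe {p : S₁ × S₃ | ∃ s₂ : S₂, (p.1, s₂) ∈ R₁ ∧ (s₂, p.2) ∈ R₂} μ₁ μ₃ := by
  intro A
  have key : relImg {p : S₁ × S₃ | ∃ s₂ : S₂, (p.1, s₂) ∈ R₁ ∧ (s₂, p.2) ∈ R₂} A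
      = relImg R₂ (relImg R₁ A) := by
    ext t
    constructor
    · rintro ⟨s, hs, s₂, h1, h2⟩
      exact ⟨s₂, ⟨s, hs, h1⟩, h2⟩
    · rintro ⟨s₂, ⟨s, hs, h1⟩, h2⟩
      exact ⟨s, hs, s₂, h1, h2⟩
  rw [key]
  exact le_trans (h12 A) (h23 _)
end

section
/- Let S₁, S₂, T be finite sets, R ⊆ S₁ × S₂ a relation, μ₁, μ₂ distributions on S₁, S₂, and ν a distribution on T. If μ₁ ⊑_R μ₂, then μ₁ × ν ⊑_{R_∥} μ₂ × ν, where R_∥ = {((s₁,t),(s₂,t)) | (s₁,s₂) ∈ R, t ∈ T}. -/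
lemma setSum_eq_sum_indicator {S : Type*} [Fintype S] (f : S → ℝ) (A : Set S) :
    setSum f A = ∑ s, A.indicator f s := by
  rw [setSum, finsum_mem_def, finsum_eq_sum_of_fintype]

lemma setSum_prod {S T : Type*} [Fintype S] [Fintype T] (μ : S → ℝ) (ν : T → ℝ)
    (A : Set (S × T)) :
    setSum (fun p => μ p.1 * ν p.2) A
      = ∑ t, ν t * setSum μ {s | (s, t) ∈ A} := by
  classical
  rw [setSum_eq_sum_indicator]
  rw [Fintype.sum_prod_type_right]
  apply Finset.sum_congr rfl
  intro t _
  rw [setSum_eq_sum_indicator, Finset.mul_sum]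
  apply Finset.sum_congr rfl
  intro s _
  by_cases hA : (s, t) ∈ A
  · rw [Set.indicator_of_mem (show s ∈ {s | (s, t) ∈ A} from hA),
      Set.indicator_of_mem hA]
    ring
  · rw [Set.indicator_of_notMem (show s ∉ {s | (s, t) ∈ A} from hA),
      Set.indicator_of_notMem hA]
    ring

/-- Distribution lifting is compatible with taking products with a common
distribution ν, using the lifted relation R_∥. -/
theorem distLe_prod {S₁ S₂ T : Type*} [Fintype S₁] [Fintype S₂] [Fintype T]
    (R : Set (S₁ × S₂)) (μ₁ : S₁ → ℝ) (μ₂ : S₂ → ℝ) (ν : T → ℝ)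
    (h₁0 : ∀ s, 0 ≤ μ₁ s) (h₁ : ∑ s, μ₁ s = 1)
    (h₂0 : ∀ s, 0 ≤ μ₂ s) (h₂ : ∑ s, μ₂ s = 1)
    (hν0 : ∀ t, 0 ≤ ν t) (hν : ∑ t, ν t = 1)
    (h : distLe R μ₁ μ₂) :
    distLe {q : (S₁ × T) × (S₂ × T) | (q.1.1, q.2.1) ∈ R ∧ q.1.2 = q.2.2}
      (fun p => μ₁ p.1 * ν p.2) (fun p => μ₂ p.1 * ν p.2) := by
  intro A
  rw [setSum_prod, setSum_prod]
  apply Finset.sum_le_sum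
  intro t _
  have hslice : {s₂ | (s₂, t) ∈
      relImg {q : (S₁ × T) × (S₂ × T) | (q.1.1, q.2.1) ∈ R ∧ q.1.2 = q.2.2} A}
      = relImg R {s₁ | (s₁, t) ∈ A} := by
    ext s₂
    constructor
    · rintro ⟨⟨s₁, t'⟩, hmem, hR, ht⟩
      have ht' : t' = t := ht
      exact ⟨s₁, ht' ▸ hmem, hR⟩
    · rintro ⟨s₁, hmem, hR⟩
      exact ⟨(s₁, t), hmem, hR, rfl⟩
  rw [hslice]
  exact mul_le_mul_of_nonneg_left (h _) (hν0 t)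
end

section
/- Let S₁, S₂ be finite sets. Then μ₁ ⊑_R μ₂ holds if and only if there exists a weight function w : S₁ × S₂ → [0,1] such that (i) for all s ∈ S₁, ∑_{t ∈ S₂} w(s,t) = μ₁(s), (ii) for all t ∈ S₂, ∑_{s ∈ S₁} w(s,t) = μ₂(t), and (iii) w(s,t) > 0 implies (s,t) ∈ R. -/
/-!
The easy direction sums a weight function over `A × R(A)`. Conversely, the transport plans
supported on `R` with first marginal `μ₁` form a compact convex set, hence so do their second
marginals. If `μ₂` were not one of them, a separating functional `z` would give
`∑ t, μ₂ t * z t < ∑ s, μ₁ s * g s` with `g s = min_{t ∈ R(s)} z t`. But `R` maps the superlevel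
set `{g ≥ c}` into `{z ≥ c}`, so the subset condition says that `g` under `μ₁` is stochastically
dominated by `z` under `μ₂`, and the layer-cake formula turns this into the reverse inequality.
-/

open Finset MeasureTheory

lemma intervalIntegrable_indicator_le (x m a b : ℝ) :
    IntervalIntegrable ({c | c ≤ x}.indicator fun _ => m) volume a b := by
  rw [intervalIntegrable_iff]
  exact (integrableOn_const (by simp)).indicator measurableSet_Iic

section LayerCake

variable {S : Type*} [Fintype S] (μ g : S → ℝ)

lemma sum_filter_le_eq_sum_indicator (c : ℝ) :
    ∑ s with c ≤ g s, μ s = ∑ s, {x | x ≤ g s}.indicator (fun _ => μ s) c := by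
  rw [sum_filter]
  rfl

lemma intervalIntegrable_sum_filter_le (a b : ℝ) :
    IntervalIntegrable (fun c => ∑ s with c ≤ g s, μ s) volume a b := by
  have hfun : (fun c => ∑ s with c ≤ g s, μ s) = ∑ s, {x | x ≤ g s}.indicator fun _ => μ s := by
    ext c
    rw [sum_filter_le_eq_sum_indicator, Finset.sum_apply]
  rw [hfun]
  exact IntervalIntegrable.sum univ fun s _ => intervalIntegrable_indicator_le (g s) (μ s) a b

theorem sum_mul_eq_integral_sum_filter_le {a b : ℝ} (hg : ∀ s, g s ∈ Set.Icc a b) :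
    ∑ s, μ s * g s = a * ∑ s, μ s + ∫ c in a..b, ∑ s with c ≤ g s, μ s := by
  simp_rw [sum_filter_le_eq_sum_indicator,
    intervalIntegral.integral_finsetSum fun s _ => intervalIntegrable_indicator_le _ _ _ _,
    intervalIntegral.integral_indicator (hg _), intervalIntegral.integral_const, smul_eq_mul,
    mul_sum, ← sum_add_distrib]
  exact sum_congr rfl fun s _ => by ring

end LayerCake

theorem sum_mul_le_of_sum_filter_le {S T : Type*} [Fintype S] [Fintype T]
    {μ g : S → ℝ} {ν h : T → ℝ} (hμν : ∑ s, μ s = ∑ t, ν t)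
    (hdom : ∀ c, ∑ s with c ≤ g s, μ s ≤ ∑ t with c ≤ h t, ν t) :
    ∑ s, μ s * g s ≤ ∑ t, ν t * h t := by
  obtain ⟨a, ha⟩ := ((Set.finite_range g).union (Set.finite_range h)).bddBelow
  obtain ⟨b, hb⟩ := ((Set.finite_range g).union (Set.finite_range h)).bddAbove
  have bounds : ∀ x ∈ Set.range g ∪ Set.range h, x ∈ Set.Icc a (max a b) :=
    fun x hx => ⟨ha hx, le_max_of_le_right (hb hx)⟩
  rw [sum_mul_eq_integral_sum_filter_le μ g fun s => bounds _ (.inl ⟨s, rfl⟩),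
    sum_mul_eq_integral_sum_filter_le ν h fun t => bounds _ (.inr ⟨t, rfl⟩), hμν]
  gcongr
  exact intervalIntegral.integral_mono_on (le_max_left a b)
    (intervalIntegrable_sum_filter_le μ g a _) (intervalIntegrable_sum_filter_le ν h a _)
    fun c _ => hdom c

section SetSum

variable {S : Type*} [Fintype S]

lemma setSum_eq_sum_filter (μ : S → ℝ) (p : S → Prop) [DecidablePred p] :
    setSum μ {s | p s} = ∑ s with p s, μ s := by
  classical
  rw [setSum, finsum_mem_eq_toFinset_sum, Set.toFinset_ofPred]

lemma setSum_mono {μ : S → ℝ} (hμ : ∀ s, 0 ≤ μ s) {A B : Set S} (hAB : A ⊆ B) :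
    setSum μ A ≤ setSum μ B := by
  classical
  rw [setSum, setSum, finsum_mem_eq_toFinset_sum, finsum_mem_eq_toFinset_sum]
  exact sum_le_sum_of_subset_of_nonneg (Set.toFinset_subset_toFinset.mpr hAB)
    fun s _ _ => hμ s

end SetSum

section Coupling

variable {S₁ S₂ : Type*} {R : Set (S₁ × S₂)} {μ : S₁ → ℝ} {ν : S₂ → ℝ}

theorem distLe.eq_zero_of_forall_notMem (hle : distLe R μ ν) {s : S₁} (hμ : 0 ≤ μ s)
    (hs : ∀ t, (s, t) ∉ R) : μ s = 0 := by
  have hle_s := hle {s}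
  have hempty : relImg R {s} = ∅ := by
    ext t
    simp [relImg, hs]
  simp only [setSum, finsum_mem_singleton, hempty, finsum_mem_empty] at hle_s
  exact le_antisymm hle_s hμ

theorem distLe.exists_row [Fintype S₂] (hle : distLe R μ ν) {s : S₁} (hμ : 0 ≤ μ s)
    (z : S₂ → ℝ) :
    ∃ r : S₂ → ℝ, ∃ m : ℝ, (∀ t, 0 ≤ r t) ∧ (∀ t, (s, t) ∉ R → r t = 0) ∧
      ∑ t, r t = μ s ∧ ∑ t, r t * z t = μ s * m ∧ ∀ t, (s, t) ∈ R → m ≤ z t := by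
  classical
  -- Put the whole mass `μ s` on a minimiser of `z` over `R(s)`; if `R(s) = ∅` then `μ s = 0`.
  by_cases hN : ∃ t, (s, t) ∈ R
  · obtain ⟨t₁, ht₁⟩ := hN
    obtain ⟨t₀, ht₀, hmin⟩ := exists_min_image (univ.filter fun t => (s, t) ∈ R) z
      ⟨t₁, by simpa using ht₁⟩
    rw [mem_filter] at ht₀
    refine ⟨Pi.single t₀ (μ s), z t₀, fun t => ?_, fun t ht => ?_, by simp, ?_,
      fun t ht => hmin t (by simpa using ht)⟩
    · by_cases h : t = t₀
      · subst h
        simpa using hμ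
      · simp [h]
    · have h : t ≠ t₀ := fun h => ht (h ▸ ht₀.2)
      simp [h]
    · simp [Pi.single_apply]
  · push Not at hN
    exact ⟨0, 0, by simp, by simp, by simp [hle.eq_zero_of_forall_notMem hμ hN], by simp,
      fun t ht => absurd ht (hN t)⟩

variable (R) in
def transportPlans [Fintype S₂] (μ : S₁ → ℝ) : Set (S₁ × S₂ → ℝ) :=
  {w | (∀ p, 0 ≤ w p) ∧ (∀ p ∉ R, w p = 0) ∧ ∀ s, ∑ t, w (s, t) = μ s}

lemma convex_transportPlans [Fintype S₂] : Convex ℝ (transportPlans R μ) := by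
  rintro v ⟨hv0, hvR, hvμ⟩ w ⟨hw0, hwR, hwμ⟩ a b ha hb hab
  refine ⟨fun p => ?_, fun p hp => ?_, fun s => ?_⟩
  · simp only [Pi.add_apply, Pi.smul_apply, smul_eq_mul]
    exact add_nonneg (mul_nonneg ha (hv0 p)) (mul_nonneg hb (hw0 p))
  · simp [hvR p hp, hwR p hp]
  · simp only [Pi.add_apply, Pi.smul_apply, smul_eq_mul, sum_add_distrib, ← mul_sum, hvμ, hwμ]
    rw [← add_mul, hab, one_mul]

lemma le_of_mem_transportPlans [Fintype S₂] {w : S₁ × S₂ → ℝ} (hw : w ∈ transportPlans R μ)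
    (p : S₁ × S₂) : w p ≤ μ p.1 := by
  rw [← hw.2.2 p.1]
  exact single_le_sum (f := fun t => w (p.1, t)) (fun t _ => hw.1 _) (mem_univ p.2)

lemma isCompact_transportPlans [Fintype S₂] : IsCompact (transportPlans R μ) := by
  refine (isCompact_Icc (a := 0) (b := fun p => μ p.1)).of_isClosed_subset ?_ ?_
  · simp only [transportPlans, Set.ofPred_and, Set.ofPred_forall]
    refine .inter (isClosed_iInter fun p => isClosed_le continuous_const (continuous_apply p))
      (.inter (isClosed_iInter fun p => isClosed_iInter fun _ =>
          isClosed_eq (continuous_apply p) continuous_const)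
        (isClosed_iInter fun s => isClosed_eq (by fun_prop) continuous_const))
  · exact fun w hw => ⟨hw.1, le_of_mem_transportPlans hw⟩

variable (S₁ S₂) in
def sndMarginal [Fintype S₁] : (S₁ × S₂ → ℝ) →ₗ[ℝ] S₂ → ℝ :=
  LinearMap.pi fun t => ∑ s, LinearMap.proj (s, t)

@[simp]
lemma sndMarginal_apply [Fintype S₁] (w : S₁ × S₂ → ℝ) (t : S₂) :
    sndMarginal S₁ S₂ w t = ∑ s, w (s, t) := by
  simp [sndMarginal]

variable [Fintype S₁] [Fintype S₂]

theorem distLe.sum_mul_le (hle : distLe R μ ν) (hν : ∀ t, 0 ≤ ν t)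
    (hμν : ∑ s, μ s = ∑ t, ν t) {g : S₁ → ℝ} {h : S₂ → ℝ} (hgh : ∀ p ∈ R, g p.1 ≤ h p.2) :
    ∑ s, μ s * g s ≤ ∑ t, ν t * h t := by
  refine sum_mul_le_of_sum_filter_le hμν fun c => ?_
  have himg : relImg R {s | c ≤ g s} ⊆ {t | c ≤ h t} := by
    rintro t ⟨s, hs, hst⟩
    exact le_trans hs (hgh _ hst)
  calc ∑ s with c ≤ g s, μ s = setSum μ {s | c ≤ g s} := (setSum_eq_sum_filter μ _).symm
    _ ≤ setSum ν (relImg R {s | c ≤ g s}) := hle _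
    _ ≤ setSum ν {t | c ≤ h t} := setSum_mono hν himg
    _ = ∑ t with c ≤ h t, ν t := setSum_eq_sum_filter ν _

theorem distLe.exists_transportPlan_le (hle : distLe R μ ν) (hμ : ∀ s, 0 ≤ μ s)
    (hν : ∀ t, 0 ≤ ν t) (hμν : ∑ s, μ s = ∑ t, ν t) (φ : (S₂ → ℝ) →ₗ[ℝ] ℝ) :
    ∃ w ∈ transportPlans R μ, φ (sndMarginal S₁ S₂ w) ≤ φ ν := by
  classical
  set z : S₂ → ℝ := fun t => φ fun t' => if t = t' then 1 else 0
  have hφ : ∀ x, φ x = ∑ t, x t * z t := fun x => by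
    simp [φ.pi_apply_eq_sum_univ x, z, smul_eq_mul]
  choose r m hr0 hrR hrμ hrz hm using fun s => hle.exists_row (hμ s) z
  refine ⟨fun p => r p.1 p.2, ⟨fun p => hr0 _ _, fun p hp => hrR _ _ hp, hrμ⟩, ?_⟩
  calc φ (sndMarginal S₁ S₂ fun p => r p.1 p.2) = ∑ s, ∑ t, r s t * z t := by
        simp only [hφ, sndMarginal_apply, sum_mul]
        exact sum_comm
    _ = ∑ s, μ s * m s := sum_congr rfl fun s _ => hrz s
    _ ≤ ∑ t, ν t * z t := hle.sum_mul_le hν hμν fun p hp => hm p.1 p.2 hp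
    _ = φ ν := (hφ ν).symm

theorem distLe.exists_transportPlan_sndMarginal_eq (hle : distLe R μ ν) (hμ : ∀ s, 0 ≤ μ s)
    (hν : ∀ t, 0 ≤ ν t) (hμν : ∑ s, μ s = ∑ t, ν t) :
    ∃ w ∈ transportPlans R μ, sndMarginal S₁ S₂ w = ν := by
  by_contra hnot
  obtain ⟨φ, u, hφν, hφu⟩ := geometric_hahn_banach_point_closed
    (convex_transportPlans.linear_image _)
    (isCompact_transportPlans.image (sndMarginal S₁ S₂).continuous_of_finiteDimensional).isClosed
    (x := ν) fun ⟨w, hw, hwν⟩ => hnot ⟨w, hw, hwν⟩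
  obtain ⟨w, hw, hwφ⟩ := hle.exists_transportPlan_le hμ hν hμν φ.toLinearMap
  exact absurd (hφu _ ⟨w, hw, rfl⟩) (not_lt.mpr (hwφ.trans hφν.le))

theorem distLe_of_mem_transportPlans {w : S₁ × S₂ → ℝ} (hw : w ∈ transportPlans R μ)
    (hwν : sndMarginal S₁ S₂ w = ν) : distLe R μ ν := by
  classical
  obtain ⟨hw0, hwR, hwμ⟩ := hw
  intro A
  simp only [setSum, finsum_mem_eq_toFinset_sum, ← hwμ, ← hwν, sndMarginal_apply]
  calc ∑ s ∈ A.toFinset, ∑ t, w (s, t)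
        = ∑ s ∈ A.toFinset, ∑ t ∈ (relImg R A).toFinset, w (s, t) := by
        refine sum_congr rfl fun s hs => (sum_subset (subset_univ _) fun t _ ht => hwR _ ?_).symm
        exact fun hst => ht (Set.mem_toFinset.mpr ⟨s, Set.mem_toFinset.mp hs, hst⟩)
    _ = ∑ t ∈ (relImg R A).toFinset, ∑ s ∈ A.toFinset, w (s, t) := sum_comm
    _ ≤ ∑ t ∈ (relImg R A).toFinset, ∑ s, w (s, t) := by
        gcongr with t
        · exact fun s _ _ => hw0 (s, t)
        · exact subset_univ _

end Coupling

theorem distLe_iff_weight_function_general {S₁ S₂ : Type*} [Fintype S₁] [Fintype S₂]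
    (R : Set (S₁ × S₂)) (μ₁ : S₁ → ℝ) (μ₂ : S₂ → ℝ)
    (h₁0 : ∀ s, 0 ≤ μ₁ s) (h₁ : ∑ s, μ₁ s = 1)
    (h₂0 : ∀ t, 0 ≤ μ₂ t) (h₂ : ∑ t, μ₂ t = 1) :
    distLe R μ₁ μ₂ ↔
      ∃ w : S₁ × S₂ → ℝ,
        (∀ p, 0 ≤ w p ∧ w p ≤ 1) ∧
        (∀ s : S₁, ∑ t : S₂, w (s, t) = μ₁ s) ∧
        (∀ t : S₂, ∑ s : S₁, w (s, t) = μ₂ t) ∧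
        (∀ p, 0 < w p → p ∈ R) := by
  constructor
  · intro hle
    obtain ⟨w, hw, hwν⟩ :=
      hle.exists_transportPlan_sndMarginal_eq h₁0 h₂0 (h₁.trans h₂.symm)
    refine ⟨w, fun p => ⟨hw.1 p, ?_⟩, hw.2.2, fun t => by simpa using congrFun hwν t,
      fun p hp => by_contra fun hpR => hp.ne' (hw.2.1 p hpR)⟩
    calc w p ≤ μ₁ p.1 := le_of_mem_transportPlans hw p
      _ ≤ ∑ s, μ₁ s := single_le_sum (fun s _ => h₁0 s) (mem_univ p.1)
      _ = 1 := h₁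
  · rintro ⟨w, hw01, hwμ, hwν, hwR⟩
    refine distLe_of_mem_transportPlans ⟨fun p => (hw01 p).1, fun p hpR => ?_, hwμ⟩ ?_
    · exact le_antisymm (not_lt.mp (mt (hwR p) hpR)) (hw01 p).1
    · ext t
      simp [hwν]

/-- Equivalence between the subset characterization of distribution simulation
and the weight-function definition. -/
theorem distLe_iff_weight_function {S₁ S₂ : Type*} [Fintype S₁] [Fintype S₂]
    (R : Set (S₁ × S₂)) (μ₁ : S₁ → ℝ) (μ₂ : S₂ → ℝ)
    (h₁0 : ∀ s, 0 ≤ μ₁ s) (h₁1 : ∀ s, μ₁ s ≤ 1) (h₁ : ∑ s, μ₁ s = 1)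
    (h₂0 : ∀ t, 0 ≤ μ₂ t) (h₂1 : ∀ t, μ₂ t ≤ 1) (h₂ : ∑ t, μ₂ t = 1) :
    distLe R μ₁ μ₂ ↔
      ∃ w : S₁ × S₂ → ℝ,
        (∀ p, 0 ≤ w p ∧ w p ≤ 1) ∧
        (∀ s : S₁, ∑ t : S₂, w (s, t) = μ₁ s) ∧
        (∀ t : S₂, ∑ s : S₁, w (s, t) = μ₂ t) ∧
        (∀ p, 0 < w p → p ∈ R) :=
  distLe_iff_weight_function_general R μ₁ μ₂ h₁0 h₁ h₂0 h₂
end
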